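/- The modular element intertwines the two modular automorphisms: δ·σ(a) = σ'(a)·δ for every a ∈ A. -/

import Mathlib

open HopfAlgebra

theorem LinearMap.eq_of_forall_map_mul_left_eq {R A M : Type*} [Semiring R] [Ring A] [Module R A]
    [AddCommGroup M] [Module R M] (φ : A →ₗ[R] M)
    (hφ : ∀ a : A, (∀ b : A, φ (b * a) = 0) → a = 0) {x y : A}
    (h : ∀ b : A, φ (b * x) = φ (b * y)) : x = y :=
  sub_eq_zero.mp <| hφ _ fun b => by rw [mul_sub, map_sub, h, sub_self]

theorem modular_element_intertwines_modular_automorphisms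
    {A : Type*} [Ring A] [HopfAlgebra ℂ A]
    (φ : A →ₗ[ℂ] ℂ)
    (hφf2 : ∀ a : A, (∀ b : A, φ (b * a) = 0) → a = 0)
    (σ : A ≃ₐ[ℂ] A) (hσ : ∀ a b : A, φ (a * b) = φ (b * σ a))
    (σ' : A ≃ₐ[ℂ] A)
    (hσ' : ∀ a b : A, φ (antipode (R := ℂ) (a * b)) = φ (antipode (R := ℂ) (b * σ' a)))
    (δ : Aˣ)
    (hδ : ∀ a : A, φ (antipode (R := ℂ) a) = φ (a * δ)) :
    ∀ a : A, (δ : A) * σ a = σ' a * (δ : A) := by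
  intro a
  refine φ.eq_of_forall_map_mul_left_eq hφf2 fun b => ?_
  calc φ (b * (δ * σ a)) = φ (a * (b * δ)) := by rw [hσ a, mul_assoc]
    _ = φ (antipode (R := ℂ) (a * b)) := by rw [hδ, mul_assoc]
    _ = φ (antipode (R := ℂ) (b * σ' a)) := hσ' a b
    _ = φ (b * (σ' a * δ)) := by rw [hδ, mul_assoc]
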